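/- In ℚ[a,h,x₁,x₂], multiplication by x₁ − x₂ maps the ideal I₁ = (x₁ + x₂ − h, x₁x₂ + a) into the ideal I₂ = (x₁² − hx₁ − a, x₂² − hx₂ − a), so it induces a well-defined R₀-linear map λ : B₁ → B₂ sending the class of u to the class of (x₁ − x₂)·u; moreover, under the isomorphisms f : B₁ ≅ 𝒜 and g : B₂ ≅ 𝒜 ⊗_{R₀} 𝒜 the map λ corresponds to the comultiplication Δ, i.e. g ∘ λ = Δ ∘ f as R₀-linear maps B₁ → 𝒜 ⊗_{R₀} 𝒜. (This is the statement Λ₁* = Δ for the induced map on homology.) -/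

import Mathlib

/-! Multiplication by `x₁ − x₂` sends the generators of `I₁` into `I₂`: with
`r_i = x_i² − h x_i − a` one has `(x₁ − x₂)(x₁ + x₂ − h) = r₁ − r₂` and
`(x₁ − x₂)(x₁x₂ + a) = x₂ r₁ − x₁ r₂`. Both `g ∘ λ ∘ f⁻¹` and `Δ` are `R₀`-linear on `𝒜`, which
is free on `1, X`, so it suffices to compare them there. Writing `X₁ = X ⊗ 1`, `X₂ = 1 ⊗ X`,
the class of `x₂` goes to `h − X₂`, so `x₁ − x₂ ↦ X₁ + X₂ − h` and
`(x₁ − x₂)x₁ ↦ X₁² − (h − X₂)X₁ = X₁X₂ + a`. -/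

open TensorProduct

noncomputable section

/-- `R₀ = ℚ[a,h]`. -/
abbrev R0 : Type := MvPolynomial (Fin 2) ℚ

noncomputable def aP : R0 := MvPolynomial.X 0
noncomputable def hP : R0 := MvPolynomial.X 1

noncomputable def quadPoly : Polynomial R0 :=
  Polynomial.X ^ 2 - Polynomial.C hP * Polynomial.X - Polynomial.C aP

/-- `𝒜 = R₀[X]/(X² − h·X − a)`. -/
abbrev Afr : Type := AdjoinRoot quadPoly

noncomputable def Xa : Afr := AdjoinRoot.root quadPoly

/-- `ℚ[a,h,x₁,x₂]`, realized as the polynomial ring in `x₁ = X 0`, `x₂ = X 1` over `R₀`. -/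
abbrev S : Type := MvPolynomial (Fin 2) R0

noncomputable def y1 : S := MvPolynomial.X 0
noncomputable def y2 : S := MvPolynomial.X 1

/-- The ideal `(x₁ + x₂ − h, x₁x₂ + a)`. -/
noncomputable def I1 : Ideal S :=
  Ideal.span ({y1 + y2 - MvPolynomial.C hP, y1 * y2 + MvPolynomial.C aP} : Set S)

/-- The ideal `(x₁² − hx₁ − a, x₂² − hx₂ − a)`. -/
noncomputable def I2 : Ideal S :=
  Ideal.span ({y1 ^ 2 - MvPolynomial.C hP * y1 - MvPolynomial.C aP,
    y2 ^ 2 - MvPolynomial.C hP * y2 - MvPolynomial.C aP} : Set S)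

/-- `B₁ = ℚ[a,h,x₁,x₂]/(x₁ + x₂ − h, x₁x₂ + a)`. -/
abbrev B1 : Type := S ⧸ I1

/-- `B₂ = ℚ[a,h,x₁,x₂]/(x₁² − hx₁ − a, x₂² − hx₂ − a)`. -/
abbrev B2 : Type := S ⧸ I2

open Polynomial

theorem AdjoinRoot.linearMap_ext_of_monic {R M : Type*} [CommRing R] [AddCommMonoid M]
    [Module R M] {p : R[X]} (hp : p.Monic) {φ ψ : AdjoinRoot p →ₗ[R] M}
    (h : ∀ i < p.natDegree, φ (AdjoinRoot.root p ^ i) = ψ (AdjoinRoot.root p ^ i)) : φ = ψ :=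
  (AdjoinRoot.powerBasis' hp).basis.ext fun i => by
    simpa [PowerBasis.coe_basis] using h i i.isLt

theorem quadPoly_monic : quadPoly.Monic := by
  unfold quadPoly
  monicity!

theorem quadPoly_natDegree : quadPoly.natDegree = 2 := by
  unfold quadPoly
  compute_degree!

theorem Afr.linearMap_ext {M : Type*} [AddCommMonoid M] [Module R0 M] {φ ψ : Afr →ₗ[R0] M}
    (h1 : φ 1 = ψ 1) (hX : φ Xa = ψ Xa) : φ = ψ := by
  refine AdjoinRoot.linearMap_ext_of_monic quadPoly_monic fun i hi => ?_
  rw [quadPoly_natDegree] at hi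
  interval_cases i
  · simpa using h1
  · simpa [Xa] using hX

theorem Xa_sq : Xa ^ 2 = algebraMap R0 Afr hP * Xa + algebraMap R0 Afr aP := by
  have h : AdjoinRoot.mk quadPoly (X ^ 2 - C hP * X - C aP) = 0 := AdjoinRoot.mk_self
  simp only [map_sub, map_pow, map_mul, AdjoinRoot.mk_X, AdjoinRoot.mk_C,
    ← AdjoinRoot.algebraMap_eq] at h
  rw [Xa]
  linear_combination h

theorem Xa_tmul_one_sq : (Xa ⊗ₜ[R0] (1 : Afr)) ^ 2 =
    algebraMap R0 _ hP * (Xa ⊗ₜ[R0] (1 : Afr)) + algebraMap R0 _ aP := by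
  have h := congr(Algebra.TensorProduct.includeLeft (R := R0) (S := R0) (B := Afr) $Xa_sq)
  rwa [map_pow, map_add, map_mul, AlgHom.commutes, AlgHom.commutes] at h

theorem mul_y1_sub_y2_mem_I2 {u : S} (hu : u ∈ I1) : (y1 - y2) * u ∈ I2 := by
  obtain ⟨p, q, rfl⟩ := Ideal.mem_span_pair.mp hu
  exact Ideal.mem_span_pair.mpr ⟨p + q * y2, -(p + q * y1), by ring⟩

def lambdaMap : B1 →ₗ[R0] B2 :=
  (Submodule.mapQ I1 I2 (LinearMap.mulLeft S (y1 - y2))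
    fun _ hu => mul_y1_sub_y2_mem_I2 hu).restrictScalars R0

theorem lambdaMap_mk (s : S) :
    lambdaMap (Ideal.Quotient.mk I1 s) = Ideal.Quotient.mk I2 ((y1 - y2) * s) :=
  rfl

theorem map_mk_y2_of_map_mk_sub_y2 (g : B2 ≃ₐ[R0] Afr ⊗[R0] Afr)
    (hg2 : g (Ideal.Quotient.mk I2 (MvPolynomial.C hP - y2)) = (1 : Afr) ⊗ₜ[R0] Xa) :
    g (Ideal.Quotient.mk I2 y2) = algebraMap R0 _ hP - (1 : Afr) ⊗ₜ[R0] Xa := by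
  rw [← hg2, map_sub, map_sub,
    show Ideal.Quotient.mk I2 (MvPolynomial.C hP) = algebraMap R0 B2 hP from rfl, g.commutes,
    sub_sub_cancel]

/-- multiplication by `x₁ − x₂` maps `I₁` into `I₂`, hence induces a
well-defined `R₀`-linear map `λ : B₁ → B₂`, `mk_{I₁} s ↦ mk_{I₂} ((x₁ − x₂)·s)`; under the
isomorphisms `f : B₁ ≅ 𝒜` and `g : B₂ ≅ 𝒜 ⊗ 𝒜`, the map `λ` corresponds to the
comultiplication `Δ`, i.e. `g ∘ λ = Δ ∘ f`.  (This is `Λ₁* = Δ`.) -/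
theorem stmt_17 (f : B1 ≃ₐ[R0] Afr) (hf : f (Ideal.Quotient.mk I1 y1) = Xa)
    (g : B2 ≃ₐ[R0] Afr ⊗[R0] Afr)
    (hg1 : g (Ideal.Quotient.mk I2 y1) = Xa ⊗ₜ[R0] (1 : Afr))
    (hg2 : g (Ideal.Quotient.mk I2 (MvPolynomial.C hP - y2)) = (1 : Afr) ⊗ₜ[R0] Xa)
    (Δ : Afr →ₗ[R0] Afr ⊗[R0] Afr)
    (hΔ1 : Δ 1 = (1 : Afr) ⊗ₜ[R0] Xa + Xa ⊗ₜ[R0] (1 : Afr) - hP • ((1 : Afr) ⊗ₜ[R0] (1 : Afr)))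
    (hΔX : Δ Xa = Xa ⊗ₜ[R0] Xa + aP • ((1 : Afr) ⊗ₜ[R0] (1 : Afr))) :
    (∀ u ∈ I1, (y1 - y2) * u ∈ I2) ∧
      ∀ s : S, g (Ideal.Quotient.mk I2 ((y1 - y2) * s)) = Δ (f (Ideal.Quotient.mk I1 s)) := by
  refine ⟨fun _ => mul_y1_sub_y2_mem_I2, fun s => ?_⟩
  suffices g.toLinearMap ∘ₗ lambdaMap ∘ₗ f.symm.toLinearMap = Δ by
    simpa [lambdaMap_mk] using congr($this (f (Ideal.Quotient.mk I1 s)))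
  have hgy2 := map_mk_y2_of_map_mk_sub_y2 g hg2
  have hf1 : f.symm Xa = Ideal.Quotient.mk I1 y1 := by rw [← hf, AlgEquiv.symm_apply_apply]
  have hXX : Xa ⊗ₜ[R0] Xa = (Xa ⊗ₜ[R0] (1 : Afr)) * ((1 : Afr) ⊗ₜ[R0] Xa) := by simp
  refine Afr.linearMap_ext ?_ ?_
  · simp only [LinearMap.comp_apply, AlgEquiv.toLinearMap_apply]
    rw [map_one, ← map_one (Ideal.Quotient.mk I1), lambdaMap_mk, mul_one, map_sub, map_sub,
      hg1, hgy2, hΔ1, Algebra.smul_def, ← Algebra.TensorProduct.one_def]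
    ring
  · simp only [LinearMap.comp_apply, AlgEquiv.toLinearMap_apply]
    rw [hf1, lambdaMap_mk, map_mul, map_mul, map_sub, map_sub, hg1, hgy2,
      hΔX, Algebra.smul_def, ← Algebra.TensorProduct.one_def, hXX]
    linear_combination Xa_tmul_one_sq

end
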